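/- Let Θ ⊆ ℝ^d be open and let g : Θ → ℝ^{d×d} be a differentiable map whose value is symmetric positive definite for every θ, with inverse entries g^{bc}(θ). Suppose functions Γ^{(m)}_{abc}, T_{abc} : Θ → ℝ with T_{abc} symmetric in its indices satisfy the dual structure identity ∂_a g_{bc}(θ) = Γ^{(m)}_{abc}(θ) + Γ^{(m)}_{acb}(θ) − T_{abc}(θ) for all indices and θ, and that the parameterization is m-affine: Γ^{(m)}_{abc}(θ) = 0 for all indices and θ. Then the Jeffreys prior π_J(θ) = (det g(θ))^{1/2} satisfies ∂_a log π_J(θ) = −(1/2) T_a(θ) for all a, where T_a = Σ_{b,c} g^{bc} T_{abc}. Consequently, any priors π_e, π_m with ∂_a log π_m − ∂_a log π_e = T_a satisfy ∂_a log(π_e/π_m) = 2 ∂_a log π_J, i.e. π_e/π_m ∝ π_J^2 when Θ is connected. -/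

import Mathlib

/-- Partial derivative of `f : ℝ^d → ℝ` along the `a`-th coordinate. -/
noncomputable def pder {d : ℕ} (a : Fin d) (f : (Fin d → ℝ) → ℝ) (θ : Fin d → ℝ) : ℝ :=
  fderiv ℝ f θ (Pi.single a 1)

/-! By Jacobi's formula `∂_a log det g = g^{bc} ∂_a g_{bc}`, and in m-affine coordinates the dual
structure identity reads `∂_a g_{bc} = -T_{abc}`, so `∂_a log √(det g) = -½ T_a`. Combined with
`∂_a log π_m - ∂_a log π_e = T_a`, the function `log (π_e/π_m) - 2 log π_J` has vanishing gradient,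
hence is constant on a connected open `Θ`. -/

open Real

namespace Matrix

variable {𝕜 : Type*} [NontriviallyNormedField 𝕜] {n : Type*} [Fintype n] [DecidableEq n]

noncomputable def detRowContinuousMultilinear :
    ContinuousMultilinearMap 𝕜 (fun _ : n => n → 𝕜) 𝕜 where
  toMultilinearMap := detRowAlternating.toMultilinearMap
  cont := continuous_id.matrix_det

theorem det_updateRow_eq_sum_adjugate {R : Type*} [CommRing R] (A : Matrix n n R) (i : n)
    (w : n → R) : (A.updateRow i w).det = ∑ j, A.adjugate j i * w j := by
  rw [← cramer_transpose_apply, cramer_eq_adjugate_mulVec, ← adjugate_transpose]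
  rfl

theorem hasFDerivAt_det_comp {E : Type*} [NormedAddCommGroup E] [NormedSpace 𝕜 E]
    {M : E → Matrix n n 𝕜} {M' : n → n → E →L[𝕜] 𝕜} {x : E}
    (hM : ∀ i j, HasFDerivAt (fun y => M y i j) (M' i j) x) :
    HasFDerivAt (fun y => (M y).det) (∑ i, ∑ j, (M x).adjugate j i • M' i j) x := by
  have hrow : ∀ i, HasFDerivAt (fun y => M y i) (ContinuousLinearMap.pi (M' i)) x :=
    fun i => hasFDerivAt_pi.2 (hM i)
  refine (HasFDerivAt.multilinear_comp (f := detRowContinuousMultilinear) hrow).congr_fderiv ?_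
  ext v
  simp only [FunLike.coe_sum, Finset.sum_apply, FunLike.coe_smul, Pi.smul_apply, smul_eq_mul,
    ContinuousLinearMap.coe_comp, Function.comp_apply,
    ContinuousMultilinearMap.toContinuousLinearMap_apply]
  exact Finset.sum_congr rfl fun i _ => det_updateRow_eq_sum_adjugate (M x) i _

theorem hasFDerivAt_log_det_comp {E : Type*} [NormedAddCommGroup E] [NormedSpace ℝ E]
    {M : E → Matrix n n ℝ} {M' : n → n → E →L[ℝ] ℝ} {x : E}
    (hM : ∀ i j, HasFDerivAt (fun y => M y i j) (M' i j) x) (hdet : (M x).det ≠ 0) :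
    HasFDerivAt (fun y => log (M y).det) (∑ i, ∑ j, (M x)⁻¹ j i • M' i j) x := by
  refine ((hasFDerivAt_det_comp hM).log hdet).congr_fderiv ?_
  simp only [Finset.smul_sum, smul_smul, inv_def, smul_apply, smul_eq_mul,
    Ring.inverse_eq_inv']

theorem hasFDerivAt_log_sqrt_det_comp {E : Type*} [NormedAddCommGroup E] [NormedSpace ℝ E]
    {M : E → Matrix n n ℝ} {M' : n → n → E →L[ℝ] ℝ} {x : E}
    (hM : ∀ i j, HasFDerivAt (fun y => M y i j) (M' i j) x) (hdet : 0 < (M x).det) :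
    HasFDerivAt (fun y => log √(M y).det) ((1 / 2 : ℝ) • ∑ i, ∑ j, (M x)⁻¹ j i • M' i j) x := by
  have hdet_near : ∀ᶠ y in nhds x, 0 < (M y).det :=
    (hasFDerivAt_det_comp hM).continuousAt.eventually (eventually_gt_nhds hdet)
  refine ((hasFDerivAt_log_det_comp hM hdet.ne').const_smul (1 / 2 : ℝ)).congr_of_eventuallyEq ?_
  filter_upwards [hdet_near] with y hy
  rw [log_sqrt hy.le, Pi.smul_apply, smul_eq_mul]
  ring

end Matrix

section PartialDerivatives

variable {d : ℕ} {f g : (Fin d → ℝ) → ℝ} {θ : Fin d → ℝ}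

theorem pder_log_sqrt_det {M : (Fin d → ℝ) → Matrix (Fin d) (Fin d) ℝ}
    (hM : ∀ i j, DifferentiableAt ℝ (fun θ' => M θ' i j) θ) (hdet : 0 < (M θ).det) (a : Fin d) :
    pder a (fun θ' => log √(M θ').det) θ =
      1 / 2 * ∑ i, ∑ j, (M θ)⁻¹ j i * pder a (fun θ' => M θ' i j) θ := by
  rw [pder, (Matrix.hasFDerivAt_log_sqrt_det_comp (fun i j => (hM i j).hasFDerivAt) hdet).fderiv]
  simp [pder]

theorem differentiableAt_log_sqrt_det {M : (Fin d → ℝ) → Matrix (Fin d) (Fin d) ℝ}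
    (hM : ∀ i j, DifferentiableAt ℝ (fun θ' => M θ' i j) θ) (hdet : 0 < (M θ).det) :
    DifferentiableAt ℝ (fun θ' => log √(M θ').det) θ :=
  (Matrix.hasFDerivAt_log_sqrt_det_comp (fun i j => (hM i j).hasFDerivAt) hdet).differentiableAt

theorem pder_const_mul (hf : DifferentiableAt ℝ f θ) (c : ℝ) (a : Fin d) :
    pder a (fun θ' => c * f θ') θ = c * pder a f θ := by
  simp [pder, fderiv_const_mul hf]

theorem pder_log_div (hf : DifferentiableAt ℝ f θ) (hg : DifferentiableAt ℝ g θ)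
    (hf₀ : f θ ≠ 0) (hg₀ : g θ ≠ 0) (a : Fin d) :
    pder a (fun θ' => log (f θ' / g θ')) θ =
      pder a (fun θ' => log (f θ')) θ - pder a (fun θ' => log (g θ')) θ := by
  have hlog_div : (fun θ' => log (f θ' / g θ')) =ᶠ[nhds θ] fun θ' => log (f θ') - log (g θ') := by
    filter_upwards [hf.continuousAt.eventually_ne hf₀, hg.continuousAt.eventually_ne hg₀]
      with θ' hf' hg'
    exact log_div hf' hg'
  rw [pder, hlog_div.fderiv_eq, fderiv_fun_sub (hf.log hf₀) (hg.log hg₀)]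
  rfl

theorem fderiv_eq_of_pder_eq (h : ∀ a, pder a f θ = pder a g θ) :
    fderiv ℝ f θ = fderiv ℝ g θ :=
  ContinuousLinearMap.coe_injective <|
    (Pi.basisFun ℝ (Fin d)).ext fun a => by simpa [pder] using h a

theorem IsOpen.exists_eq_add_of_pder_eq {s : Set (Fin d → ℝ)} (hs : IsOpen s)
    (hs' : IsPreconnected s) (hf : ∀ θ ∈ s, DifferentiableAt ℝ f θ)
    (hg : ∀ θ ∈ s, DifferentiableAt ℝ g θ) (h : ∀ θ ∈ s, ∀ a, pder a f θ = pder a g θ) :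
    ∃ c, s.EqOn f (g · + c) :=
  hs.exists_eq_add_of_fderiv_eq hs' (fun θ hθ => (hf θ hθ).differentiableWithinAt)
    (fun θ hθ => (hg θ hθ).differentiableWithinAt) fun θ hθ => fderiv_eq_of_pder_eq (h θ hθ)

end PartialDerivatives

theorem stmt_8_general {d : ℕ} (Θ : Set (Fin d → ℝ)) (hΘ_open : IsOpen Θ)
    (g : (Fin d → ℝ) → Matrix (Fin d) (Fin d) ℝ)
    (hg_diff : ∀ b c : Fin d, ∀ θ ∈ Θ, DifferentiableAt ℝ (fun θ' => g θ' b c) θ)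
    (hg_pd : ∀ θ ∈ Θ, (g θ).PosDef)
    (Γm T : (Fin d → ℝ) → Fin d → Fin d → Fin d → ℝ)
    -- T is symmetric in its indices:
    (hT_symm₂ : ∀ θ ∈ Θ, ∀ a b c : Fin d, T θ a b c = T θ a c b)
    -- the dual structure identity:
    (h_dual : ∀ θ ∈ Θ, ∀ a b c : Fin d,
      pder a (fun θ' => g θ' b c) θ = Γm θ a b c + Γm θ a c b - T θ a b c)
    -- the parameterization is m-affine:
    (h_maffine : ∀ θ ∈ Θ, ∀ a b c : Fin d, Γm θ a b c = 0)
    (Ta : (Fin d → ℝ) → Fin d → ℝ)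
    (hTa : ∀ θ ∈ Θ, ∀ a : Fin d, Ta θ a = ∑ b : Fin d, ∑ c : Fin d, (g θ)⁻¹ b c * T θ a b c)
    (πe πm : (Fin d → ℝ) → ℝ)
    (hπe_pos : ∀ θ ∈ Θ, 0 < πe θ) (hπm_pos : ∀ θ ∈ Θ, 0 < πm θ)
    (hπe_diff : ∀ θ ∈ Θ, DifferentiableAt ℝ πe θ)
    (hπm_diff : ∀ θ ∈ Θ, DifferentiableAt ℝ πm θ)
    (h_em : ∀ θ ∈ Θ, ∀ a : Fin d,
      pder a (fun θ' => Real.log (πm θ')) θ - pder a (fun θ' => Real.log (πe θ')) θ = Ta θ a) :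
    (∀ θ ∈ Θ, ∀ a : Fin d,
      pder a (fun θ' => Real.log (Real.sqrt (g θ').det)) θ = -(1 / 2) * Ta θ a) ∧
    (∀ θ ∈ Θ, ∀ a : Fin d,
      pder a (fun θ' => Real.log (πe θ' / πm θ')) θ =
        2 * pder a (fun θ' => Real.log (Real.sqrt (g θ').det)) θ) ∧
    (IsConnected Θ → ∃ k : ℝ, 0 < k ∧
      ∀ θ ∈ Θ, πe θ / πm θ = k * (Real.sqrt (g θ).det) ^ 2) := by
  have hg_diff' : ∀ θ ∈ Θ, ∀ i j, DifferentiableAt ℝ (fun θ' => g θ' i j) θ :=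
    fun θ hθ i j => hg_diff i j θ hθ
  have hdet : ∀ θ ∈ Θ, 0 < (g θ).det := fun θ hθ => (hg_pd θ hθ).det_pos
  have jeffreys : ∀ θ ∈ Θ, ∀ a, pder a (fun θ' => log √(g θ').det) θ = -(1 / 2) * Ta θ a := by
    intro θ hθ a
    have hpder_g : ∀ i j, pder a (fun θ' => g θ' i j) θ = -T θ a j i := fun i j => by
      rw [h_dual θ hθ, h_maffine θ hθ, h_maffine θ hθ, hT_symm₂ θ hθ]
      ring
    rw [pder_log_sqrt_det (hg_diff' θ hθ) (hdet θ hθ), hTa θ hθ, Finset.sum_comm]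
    simp only [hpder_g, mul_neg, Finset.sum_neg_distrib]
    ring
  have ratio : ∀ θ ∈ Θ, ∀ a, pder a (fun θ' => log (πe θ' / πm θ')) θ =
      2 * pder a (fun θ' => log √(g θ').det) θ := by
    intro θ hθ a
    rw [pder_log_div (hπe_diff θ hθ) (hπm_diff θ hθ) (hπe_pos θ hθ).ne' (hπm_pos θ hθ).ne',
      jeffreys θ hθ, ← h_em θ hθ]
    ring
  refine ⟨jeffreys, ratio, fun hconn => ?_⟩
  have hlogJ_diff : ∀ θ ∈ Θ, DifferentiableAt ℝ (fun θ' => log √(g θ').det) θ :=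
    fun θ hθ => differentiableAt_log_sqrt_det (hg_diff' θ hθ) (hdet θ hθ)
  -- `πe * πm⁻¹` is definitionally `πe / πm` on `ℝ`.
  obtain ⟨c, hc⟩ := hΘ_open.exists_eq_add_of_pder_eq hconn.isPreconnected
    (f := fun θ => log (πe θ / πm θ)) (g := fun θ => 2 * log √(g θ).det)
    (fun θ hθ => ((hπe_diff θ hθ).mul ((hπm_diff θ hθ).inv (hπm_pos θ hθ).ne')).log
      (div_pos (hπe_pos θ hθ) (hπm_pos θ hθ)).ne')
    (fun θ hθ => (hlogJ_diff θ hθ).const_mul 2)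
    fun θ hθ a => by rw [ratio θ hθ, pder_const_mul (hlogJ_diff θ hθ)]
  refine ⟨exp c, exp_pos c, fun θ hθ => ?_⟩
  calc πe θ / πm θ = exp (log (πe θ / πm θ)) :=
        (exp_log (div_pos (hπe_pos θ hθ) (hπm_pos θ hθ))).symm
    _ = exp (2 * log √(g θ).det + c) := congrArg exp (hc hθ)
    _ = exp c * √(g θ).det ^ 2 := by
        rw [exp_add, two_mul, exp_add, exp_log (sqrt_pos.2 (hdet θ hθ))]
        ring

/-- In an m-affine parameterization (`Γ^{(m)} = 0`) with dual structure
`∂_a g_{bc} = Γ^{(m)}_{abc} + Γ^{(m)}_{acb} − T_{abc}`, the Jeffreys prior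
`π_J = (det g)^{1/2}` satisfies `∂_a log π_J = −(1/2) T_a`; consequently any e- and
m-parallel priors (`∂_a log π_m − ∂_a log π_e = T_a`) satisfy
`∂_a log(π_e/π_m) = 2 ∂_a log π_J`, i.e. `π_e/π_m ∝ π_J²` when `Θ` is connected. -/
theorem stmt_8 {d : ℕ} (Θ : Set (Fin d → ℝ)) (hΘ_open : IsOpen Θ)
    (g : (Fin d → ℝ) → Matrix (Fin d) (Fin d) ℝ)
    (hg_diff : ∀ b c : Fin d, ∀ θ ∈ Θ, DifferentiableAt ℝ (fun θ' => g θ' b c) θ)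
    (hg_symm : ∀ θ ∈ Θ, (g θ).IsSymm)
    (hg_pd : ∀ θ ∈ Θ, (g θ).PosDef)
    (Γm T : (Fin d → ℝ) → Fin d → Fin d → Fin d → ℝ)
    -- T is symmetric in its indices:
    (hT_symm₁ : ∀ θ ∈ Θ, ∀ a b c : Fin d, T θ a b c = T θ b a c)
    (hT_symm₂ : ∀ θ ∈ Θ, ∀ a b c : Fin d, T θ a b c = T θ a c b)
    -- the dual structure identity:
    (h_dual : ∀ θ ∈ Θ, ∀ a b c : Fin d,
      pder a (fun θ' => g θ' b c) θ = Γm θ a b c + Γm θ a c b - T θ a b c)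
    -- the parameterization is m-affine:
    (h_maffine : ∀ θ ∈ Θ, ∀ a b c : Fin d, Γm θ a b c = 0)
    (Ta : (Fin d → ℝ) → Fin d → ℝ)
    (hTa : ∀ θ ∈ Θ, ∀ a : Fin d, Ta θ a = ∑ b : Fin d, ∑ c : Fin d, (g θ)⁻¹ b c * T θ a b c)
    (πe πm : (Fin d → ℝ) → ℝ)
    (hπe_pos : ∀ θ ∈ Θ, 0 < πe θ) (hπm_pos : ∀ θ ∈ Θ, 0 < πm θ)
    (hπe_diff : ∀ θ ∈ Θ, DifferentiableAt ℝ πe θ)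
    (hπm_diff : ∀ θ ∈ Θ, DifferentiableAt ℝ πm θ)
    (h_em : ∀ θ ∈ Θ, ∀ a : Fin d,
      pder a (fun θ' => Real.log (πm θ')) θ - pder a (fun θ' => Real.log (πe θ')) θ = Ta θ a) :
    (∀ θ ∈ Θ, ∀ a : Fin d,
      pder a (fun θ' => Real.log (Real.sqrt (g θ').det)) θ = -(1 / 2) * Ta θ a) ∧
    (∀ θ ∈ Θ, ∀ a : Fin d,
      pder a (fun θ' => Real.log (πe θ' / πm θ')) θ =
        2 * pder a (fun θ' => Real.log (Real.sqrt (g θ').det)) θ) ∧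
    (IsConnected Θ → ∃ k : ℝ, 0 < k ∧
      ∀ θ ∈ Θ, πe θ / πm θ = k * (Real.sqrt (g θ).det) ^ 2) :=
  stmt_8_general Θ hΘ_open g hg_diff hg_pd Γm T hT_symm₂ h_dual h_maffine Ta hTa πe πm hπe_pos
    hπm_pos hπe_diff hπm_diff h_em
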